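/- arXiv:2211.04651 — 2 statements merged into one kernel-verified Lean document; each statement's English description precedes it below -/
import Mathlib

section
/- Fix integers i ≤ j, n ≥ 2, a real ρ ∈ (0,1), and configurations x₁,…,xₙ, and let fₙ = Dⁿ_{i,0}(x₁,…,xₙ). Then max_{l ∈ [i,j]} ( ρ(l−i+1) − fₙ[i,l] ) ≤ 2 ∑_{k=1}^{n} max_{l ∈ [i,j]} | x_k[i,l] − ρ(l−i+1) |. -/
open scoped BigOperators

/-- A particle configuration on `ℤ`: a `{0,1}`-valued function. -/
abbrev Config := ℤ → ℤ

/-- `x` takes only the values `0` and `1`. -/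
def IsConfig (x : Config) : Prop := ∀ i, x i = 0 ∨ x i = 1

/-- `x[i,j] = ∑_{k=i}^j x(k)` (zero if `j < i`). -/
noncomputable def cnt (x : Config) (i j : ℤ) : ℤ := ∑ k ∈ Finset.Icc i j, x k

/-- `(a,s)` has finite queue lengths. -/
def FinQ (a s : Config) : Prop :=
  ∀ i : ℤ, BddAbove {v : ℤ | ∃ j ≤ i, v = cnt a j i - cnt s j i}

/-- The queue length `Q_i(a,s) = sup_{j ≤ i} max(a[j,i] - s[j,i], 0)`. -/
noncomputable def queue (a s : Config) (i : ℤ) : ℤ :=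
  sSup {q : ℤ | ∃ j ≤ i, q = max (cnt a j i - cnt s j i) 0}

/-- The departure configuration `D(a,s)`. -/
noncomputable def dep (a s : Config) : Config := fun i =>
  if s i = 1 ∧ (0 < queue a s (i - 1) ∨ a i = 1) then 1 else 0

/-- The unused-service configuration `U(a,s)`. -/
noncomputable def unusedSrv (a s : Config) : Config := fun i =>
  if s i = 1 ∧ queue a s (i - 1) = 0 ∧ a i = 0 then 1 else 0

/-- `R(a,s)(i) = a(i) + U(a,s)(i)`. -/
noncomputable def Rmap (a s : Config) : Config := fun i => a i + unusedSrv a s i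

/-- Truncation: `x_{n,0}(i) = x(i)` for `i ≥ n`, `0` otherwise. -/
def trunc (x : Config) (n : ℤ) : Config := fun i => if n ≤ i then x i else 0

/-- Left-peeling tandem queue: `Dtandem x [s₁,…,s_k] = D(…D(D(x,s₁),s₂)…,s_k)`. -/
noncomputable def Dtandem : Config → List Config → Config
  | x, [] => x
  | x, s :: rest => Dtandem (dep x s) rest

/-- `DtandemList [x₁,…,xₙ] = Dⁿ(x₁,…,xₙ)`. -/
noncomputable def DtandemList : List Config → Config
  | [] => fun _ => 0
  | x :: rest => Dtandem x rest

/-- `DtandemN x = Dⁿ(x 0, …, x (n-1))`. -/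
noncomputable def DtandemN {n : ℕ} (x : Fin n → Config) : Config :=
  DtandemList (List.ofFn x)

/-- Every pair appearing as (arrivals, services) in the recursive definition of the
tandem departure map has finite queue lengths. -/
def TandemFinQ : List Config → Prop
  | [] => True
  | [_] => True
  | x :: s :: rest => FinQ x s ∧ TandemFinQ (dep x s :: rest)
  termination_by l => l.length

/-!
If the queue fed by `a` and served by `s` was last empty just before time `m ≤ l + 1`, then
`D(a,s)[i,l] = a[i,m-1] + s[m,l]`. For any reference curve `r` this splits the shortfall
`r l - D(a,s)[i,l]` into the shortfall of `a` at `m - 1` plus the increment of the shortfall of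
`s` from `m - 1` to `l`, so each server raises the maximal shortfall by at most twice the maximal
deviation `|s[i,·] - r|`. Iterating along the tandem with `r l = ρ (l - i + 1)`, and bounding the
shortfall of `x₁` by its own deviation, gives the factor `2`.
-/

open Finset

def VanishesBelow (x : Config) (i : ℤ) : Prop := ∀ k < i, x k = 0

lemma cnt_of_lt (x : Config) {m l : ℤ} (h : l < m) : cnt x m l = 0 := by
  simp [cnt, Icc_eq_empty_of_lt h]

lemma cnt_add_cnt (x : Config) {m p l : ℤ} (h1 : m - 1 ≤ p) (h2 : p ≤ l) :
    cnt x m p + cnt x (p + 1) l = cnt x m l := by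
  have hunion : Icc m p ∪ Icc (p + 1) l = Icc m l := by
    ext k; simp only [mem_union, mem_Icc]; omega
  rw [cnt, cnt, cnt, ← hunion,
    sum_union (disjoint_left.2 fun k hk hk' => by simp only [mem_Icc] at hk hk'; omega)]

lemma cnt_add_one (x : Config) {m l : ℤ} (h : m ≤ l + 1) :
    cnt x m (l + 1) = cnt x m l + x (l + 1) := by
  rw [← cnt_add_cnt x (by omega : m - 1 ≤ l) (by omega : l ≤ l + 1)]
  simp [cnt]

lemma cnt_of_vanishesBelow {x : Config} {i : ℤ} (hx : VanishesBelow x i) {m : ℤ} (hm : m ≤ i)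
    (l : ℤ) : cnt x m l = cnt x i l :=
  (sum_subset (Icc_subset_Icc_left hm) fun k hk hki =>
    hx k (by simp only [mem_Icc] at hk hki; omega)).symm

lemma cnt_trunc (x : Config) (i l : ℤ) : cnt (trunc x i) i l = cnt x i l :=
  sum_congr rfl fun _ hk => if_pos (mem_Icc.1 hk).1

lemma IsConfig.trunc {x : Config} (hx : IsConfig x) (i : ℤ) : IsConfig (trunc x i) := by
  intro k
  unfold _root_.trunc
  split_ifs
  exacts [hx k, Or.inl rfl]

lemma vanishesBelow_trunc (x : Config) (i : ℤ) : VanishesBelow (trunc x i) i :=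
  fun _ hk => if_neg (not_le.2 hk)

section Queue

variable {a s : Config} {i : ℤ}

lemma queue_eq_sup' (ha : VanishesBelow a i) (hs : VanishesBelow s i) {l : ℤ}
    (hl : i - 1 ≤ l) :
    queue a s l = (Icc i (l + 1)).sup' (nonempty_Icc.2 (by omega))
      fun m => cnt a m l - cnt s m l := by
  set F := (Icc i (l + 1)).sup' (nonempty_Icc.2 (by omega)) fun m => cnt a m l - cnt s m l
  have hF : ∀ m ∈ Icc i (l + 1), cnt a m l - cnt s m l ≤ F := fun m hm =>
    le_sup' (fun m => cnt a m l - cnt s m l) hm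
  have hF0 : 0 ≤ F := by
    simpa [cnt_of_lt _ (lt_add_one l)] using hF (l + 1) (mem_Icc.2 ⟨by omega, le_rfl⟩)
  have hbound : ∀ q ∈ {q : ℤ | ∃ j ≤ l, q = max (cnt a j l - cnt s j l) 0}, q ≤ F := by
    rintro q ⟨m, hm, rfl⟩
    refine max_le ?_ hF0
    rcases le_or_gt i m with him | hmi
    · exact hF m (mem_Icc.2 ⟨him, by omega⟩)
    · rw [cnt_of_vanishesBelow ha hmi.le, cnt_of_vanishesBelow hs hmi.le]
      exact hF i (mem_Icc.2 ⟨le_rfl, by omega⟩)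
  have hbdd : BddAbove {q : ℤ | ∃ j ≤ l, q = max (cnt a j l - cnt s j l) 0} := ⟨F, hbound⟩
  refine le_antisymm (csSup_le ⟨_, l, le_rfl, rfl⟩ hbound) (sup'_le _ _ fun m hm => ?_)
  rcases le_or_gt m l with hml | hlm
  · exact (le_max_left _ _).trans (le_csSup hbdd ⟨m, hml, rfl⟩)
  · rw [cnt_of_lt _ hlm, cnt_of_lt _ hlm, sub_zero]
    exact (le_max_right _ _).trans (le_csSup hbdd ⟨l, le_rfl, rfl⟩)

lemma queue_nonneg (ha : VanishesBelow a i) (hs : VanishesBelow s i) {l : ℤ} (hl : i - 1 ≤ l) :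
    0 ≤ queue a s l := by
  rw [queue_eq_sup' ha hs hl]
  have := le_sup' (fun m => cnt a m l - cnt s m l)
    (mem_Icc.2 ⟨(by omega : i ≤ l + 1), le_rfl⟩)
  rwa [cnt_of_lt _ (lt_add_one l), cnt_of_lt _ (lt_add_one l), sub_self] at this

lemma queue_sub_one (ha : VanishesBelow a i) (hs : VanishesBelow s i) :
    queue a s (i - 1) = 0 := by
  rw [queue_eq_sup' ha hs le_rfl]
  simp only [sub_add_cancel, Icc_self, sup'_singleton]
  rw [cnt_of_lt _ (sub_one_lt i), cnt_of_lt _ (sub_one_lt i), sub_zero]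

/-- Lindley's recursion. -/
lemma queue_add_one (ha : VanishesBelow a i) (hs : VanishesBelow s i) {l : ℤ} (hl : i - 1 ≤ l) :
    queue a s (l + 1) = max (queue a s l + (a (l + 1) - s (l + 1))) 0 := by
  have hne : (Icc i (l + 1)).Nonempty := nonempty_Icc.2 (by omega)
  have hinsert : Icc i (l + 1 + 1) = insert (l + 1 + 1) (Icc i (l + 1)) := by
    ext k; simp only [mem_Icc, mem_insert]; omega
  have hshift : (Icc i (l + 1)).sup' hne (fun m => cnt a m (l + 1) - cnt s m (l + 1))
      = (Icc i (l + 1)).sup' hne (fun m => cnt a m l - cnt s m l) + (a (l + 1) - s (l + 1)) := by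
    rw [apply_sup'_eq_sup'_comp hne (· + (a (l + 1) - s (l + 1)))
      fun x y => (max_add_add_right x y _).symm]
    refine sup'_congr _ rfl fun m hm => ?_
    rw [Function.comp_apply, cnt_add_one a (mem_Icc.1 hm).2, cnt_add_one s (mem_Icc.1 hm).2]
    ring
  rw [queue_eq_sup' ha hs (by omega), queue_eq_sup' ha hs hl,
    sup'_congr _ hinsert fun _ _ => rfl, sup'_insert (H := hne), hshift,
    cnt_of_lt _ (lt_add_one _), cnt_of_lt _ (lt_add_one _), sub_zero, sup_comm]

lemma IsConfig.dep (a s : Config) : IsConfig (dep a s) := fun k => by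
  unfold _root_.dep; split_ifs <;> simp

lemma VanishesBelow.dep (a : Config) (hs : VanishesBelow s i) : VanishesBelow (dep a s) i :=
  fun k hk => by simp [_root_.dep, hs k hk]

lemma cnt_dep (ha : IsConfig a) (hs : IsConfig s) (ha' : VanishesBelow a i)
    (hs' : VanishesBelow s i) {l : ℤ} (hl : i - 1 ≤ l) :
    cnt (dep a s) i l = cnt a i l - queue a s l := by
  induction l, hl using Int.leInduction with
  | base => rw [cnt_of_lt _ (sub_one_lt i), cnt_of_lt _ (sub_one_lt i), queue_sub_one ha' hs']; rfl
  | succ l hl ih =>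
    have hdep : dep a s (l + 1) =
        if s (l + 1) = 1 ∧ (0 < queue a s l ∨ a (l + 1) = 1) then 1 else 0 := by
      simp only [_root_.dep, add_sub_cancel_right]
    have hq := queue_nonneg ha' hs' hl
    rw [cnt_add_one _ (by omega), cnt_add_one _ (by omega), ih, queue_add_one ha' hs' hl, hdep]
    rcases ha (l + 1) with h | h <;> rcases hs (l + 1) with h' | h' <;>
      rw [h, h'] <;> split_ifs <;> omega

lemma exists_cnt_dep_eq (ha : IsConfig a) (hs : IsConfig s) (ha' : VanishesBelow a i)
    (hs' : VanishesBelow s i) {l : ℤ} (hl : i - 1 ≤ l) :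
    ∃ m ∈ Icc i (l + 1), cnt (dep a s) i l = cnt a i (m - 1) + cnt s m l := by
  obtain ⟨m, hm, hq⟩ := exists_mem_eq_sup' (s := Icc i (l + 1)) (nonempty_Icc.2 (by omega))
    fun m => cnt a m l - cnt s m l
  refine ⟨m, hm, ?_⟩
  have hm' := mem_Icc.1 hm
  rw [cnt_dep ha hs ha' hs' hl, queue_eq_sup' ha' hs' hl, hq,
    ← cnt_add_cnt a (by omega : i - 1 ≤ m - 1) (by omega : m - 1 ≤ l), sub_add_cancel]
  ring

end Queue

section Deviation

variable {i j : ℤ} {r : ℤ → ℝ}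

lemma sub_cnt_dep_le {a s : Config} (ha : IsConfig a) (hs : IsConfig s)
    (ha' : VanishesBelow a i) (hs' : VanishesBelow s i) {B C : ℝ}
    (hB : ∀ m ∈ Icc (i - 1) j, r m - cnt a i m ≤ B)
    (hC : ∀ m ∈ Icc (i - 1) j, |(cnt s i m : ℝ) - r m| ≤ C) :
    ∀ l ∈ Icc (i - 1) j, r l - cnt (dep a s) i l ≤ B + 2 * C := by
  intro l hl
  have hl' := mem_Icc.1 hl
  obtain ⟨m, hm, hcnt⟩ := exists_cnt_dep_eq ha hs ha' hs' hl'.1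
  have hm' := mem_Icc.1 hm
  have hmem : m - 1 ∈ Icc (i - 1) j := mem_Icc.2 ⟨by omega, by omega⟩
  have hsplit : (cnt s i (m - 1) : ℝ) + cnt s m l = cnt s i l := by
    exact_mod_cast sub_add_cancel m 1 ▸ cnt_add_cnt s (by omega : i - 1 ≤ m - 1) (by omega)
  have hD : (cnt (dep a s) i l : ℝ) = cnt a i (m - 1) + cnt s m l := by exact_mod_cast hcnt
  have h1 := hB _ hmem
  have h2 := abs_le.1 (hC _ hmem)
  have h3 := abs_le.1 (hC _ hl)
  linarith

lemma sub_cnt_dtandem_le (ss : List Config)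
    (hss : ∀ t ∈ ss, IsConfig t ∧ VanishesBelow t i) (C : Config → ℝ)
    (hC : ∀ t ∈ ss, ∀ m ∈ Icc (i - 1) j, |(cnt t i m : ℝ) - r m| ≤ C t) :
    ∀ (a : Config) (B : ℝ), IsConfig a → VanishesBelow a i →
      (∀ m ∈ Icc (i - 1) j, r m - cnt a i m ≤ B) →
      ∀ l ∈ Icc (i - 1) j, r l - cnt (Dtandem a ss) i l ≤ B + 2 * (ss.map C).sum := by
  induction ss with
  | nil =>
    simp only [Dtandem, List.map_nil, List.sum_nil, mul_zero, add_zero]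
    exact fun _ _ _ _ hB => hB
  | cons t ss ih =>
    intro a B ha ha' hB l hl
    have ht := hss t (List.mem_cons_self ..)
    have hdep := sub_cnt_dep_le ha ht.1 ha' ht.2 hB (hC t (List.mem_cons_self ..))
    have := ih (fun u hu => hss u (List.mem_cons_of_mem _ hu))
      (fun u hu => hC u (List.mem_cons_of_mem _ hu)) _ _ (IsConfig.dep a t)
      (VanishesBelow.dep a ht.2) hdep l hl
    simp only [Dtandem, List.map_cons, List.sum_cons]
    linarith

lemma sub_cnt_dtandemList_le {xs : List Config} (hxs : xs ≠ [])
    (hx : ∀ t ∈ xs, IsConfig t ∧ VanishesBelow t i) (C : Config → ℝ)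
    (hC : ∀ t ∈ xs, ∀ m ∈ Icc (i - 1) j, |(cnt t i m : ℝ) - r m| ≤ C t) :
    ∀ l ∈ Icc (i - 1) j, r l - cnt (DtandemList xs) i l ≤ 2 * (xs.map C).sum := by
  obtain ⟨a, ss, rfl⟩ := List.exists_cons_of_ne_nil hxs
  intro l hl
  have ha := hx a (List.mem_cons_self ..)
  have hCa := hC a (List.mem_cons_self ..)
  have hB : ∀ m ∈ Icc (i - 1) j, r m - cnt a i m ≤ C a := fun m hm =>
    (le_abs_self _).trans ((abs_sub_comm _ _).trans_le (hCa m hm))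
  have := sub_cnt_dtandem_le ss (fun u hu => hx u (List.mem_cons_of_mem _ hu)) C
    (fun u hu => hC u (List.mem_cons_of_mem _ hu)) a _ ha.1 ha.2 hB l hl
  have hCa0 : 0 ≤ C a := (abs_nonneg _).trans
    (hCa (i - 1) (left_mem_Icc.2 ((mem_Icc.1 hl).1.trans (mem_Icc.1 hl).2)))
  simp only [DtandemList, List.map_cons, List.sum_cons]
  linarith

lemma abs_cnt_sub_le_sup' (hr : r (i - 1) = 0) (hij : i ≤ j) (y : Config) :
    ∀ m ∈ Icc (i - 1) j, |(cnt y i m : ℝ) - r m|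
      ≤ (Icc i j).sup' (nonempty_Icc.2 hij) fun l => |(cnt y i l : ℝ) - r l| := by
  intro m hm
  rcases eq_or_lt_of_le (mem_Icc.1 hm).1 with rfl | hm'
  · rw [cnt_of_lt _ (sub_one_lt i), hr, Int.cast_zero, sub_zero, abs_zero]
    exact (abs_nonneg _).trans
      (le_sup' (fun l => |(cnt y i l : ℝ) - r l|) (mem_Icc.2 ⟨le_rfl, hij⟩))
  · exact le_sup' (fun l => |(cnt y i l : ℝ) - r l|) (mem_Icc.2 ⟨by omega, (mem_Icc.1 hm).2⟩)

end Deviation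

theorem stmt7_general (i j : ℤ) (hij : i ≤ j) (n : ℕ) (hn : 2 ≤ n)
    (ρ : ℝ)
    (x : Fin n → Config) (hx : ∀ k, IsConfig (x k)) :
    (Finset.Icc i j).sup' (Finset.nonempty_Icc.mpr hij)
        (fun l => ρ * ((l : ℝ) - (i : ℝ) + 1)
          - (cnt (DtandemN fun k => trunc (x k) i) i l : ℝ))
      ≤ 2 * ∑ k : Fin n, (Finset.Icc i j).sup' (Finset.nonempty_Icc.mpr hij)
          (fun l => |(cnt (x k) i l : ℝ) - ρ * ((l : ℝ) - (i : ℝ) + 1)|) := by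
  set r : ℤ → ℝ := fun l => ρ * ((l : ℝ) - (i : ℝ) + 1)
  have hr : r (i - 1) = 0 := by simp [r]
  set M : Config → ℝ := fun y =>
    (Icc i j).sup' (nonempty_Icc.2 hij) fun l => |(cnt y i l : ℝ) - r l|
  have hM : ∀ y, M (trunc y i) = M y := fun y =>
    sup'_congr _ rfl fun l _ => by rw [cnt_trunc]
  have hxs : List.ofFn (fun k => trunc (x k) i) ≠ [] := by
    simpa [List.ofFn_eq_nil_iff] using (by omega : n ≠ 0)
  have key := sub_cnt_dtandemList_le (j := j) (r := r) hxs
    (fun _ ht => by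
      obtain ⟨k, rfl⟩ := List.mem_ofFn.1 ht
      exact ⟨(hx k).trunc i, vanishesBelow_trunc (x k) i⟩) M
    (fun _ ht => by
      obtain ⟨k, rfl⟩ := List.mem_ofFn.1 ht
      exact abs_cnt_sub_le_sup' hr hij _)
  simp only [List.map_ofFn, List.sum_ofFn, Function.comp_def, hM] at key
  exact sup'_le _ _ fun l hl => key l (Icc_subset_Icc_left (by omega) hl)

/-- With `fₙ = Dⁿ_{i,0}(x₁,…,xₙ)`,
`max_{l ∈ [i,j]} (ρ(l−i+1) − fₙ[i,l]) ≤ 2 ∑_{k=1}^n max_{l ∈ [i,j]} |x_k[i,l] − ρ(l−i+1)|`. -/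
theorem stmt7 (i j : ℤ) (hij : i ≤ j) (n : ℕ) (hn : 2 ≤ n)
    (ρ : ℝ) (hρ0 : 0 < ρ) (hρ1 : ρ < 1)
    (x : Fin n → Config) (hx : ∀ k, IsConfig (x k)) :
    (Finset.Icc i j).sup' (Finset.nonempty_Icc.mpr hij)
        (fun l => ρ * ((l : ℝ) - (i : ℝ) + 1)
          - (cnt (DtandemN fun k => trunc (x k) i) i l : ℝ))
      ≤ 2 * ∑ k : Fin n, (Finset.Icc i j).sup' (Finset.nonempty_Icc.mpr hij)
          (fun l => |(cnt (x k) i l : ℝ) - ρ * ((l : ℝ) - (i : ℝ) + 1)|) :=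
  stmt7_general i j hij n hn ρ x hx
end

section
/- Let a and s be configurations such that (a,s) has finite queue lengths, and set d = D(a,s) and r = R(a,s). Then for all integers s₀ < t, min_{ℓ ∈ [s₀,t]} ( a[s₀,ℓ−1] + s[ℓ,t−1] ) = min_{ℓ ∈ [s₀,t]} ( r[s₀,ℓ−1] + d[ℓ,t−1] ), where sums over empty index ranges equal 0. -/
open scoped BigOperators

/-!
Let `Q` be the queue length and `u = U(a,s)`. Lindley's recursion
`Q_i = max(Q_{i-1} + a(i) - s(i), 0)` gives `d(i) = a(i) + Q_{i-1} - Q_i` and `s = d + u`, so after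
telescoping both quantities being minimised are `a[s₀,t-1] - Q_{t-1} + Q_{ℓ-1}` plus, respectively,
`u[ℓ,t-1]` and `u[s₀,ℓ-1]`. If `u` vanishes on `[s₀,t-1]` the two functions of `ℓ` agree. Otherwise
both minima equal `a[s₀,t-1] - Q_{t-1}`: an unused service happens only when the queue is empty
before and after it, so the first one, resp. just after the last one, is a zero of the
non-negative remainder.
-/

lemma Finset.inf'_eq_of_forall_le_of_eq {ι α : Type*} [LinearOrder α] {s : Finset ι}
    (hs : s.Nonempty) {f : ι → α} {c : α} (hle : ∀ i ∈ s, c ≤ f i) {i : ι} (hi : i ∈ s)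
    (hfi : f i = c) : s.inf' hs f = c :=
  le_antisymm (hfi ▸ Finset.inf'_le f hi) (Finset.le_inf' hs f hle)

lemma Finset.add_inf' {ι α : Type*} [LinearOrder α] [AddGroup α] [AddLeftMono α]
    {s : Finset ι} (hs : s.Nonempty) (f : ι → α) (c : α) :
    c + s.inf' hs f = s.inf' hs fun i => c + f i :=
  map_finset_inf' (OrderIso.addLeft c) hs f

section Counts

variable (x : Config)

lemma cnt_split {i j k : ℤ} (hij : i ≤ j) (hjk : j ≤ k + 1) :
    cnt x i k = cnt x i (j - 1) + cnt x j k := by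
  simp only [cnt, ← Finset.Ico_add_one_right_eq_Icc, sub_add_cancel]
  rw [← Finset.sum_union (Finset.Ico_disjoint_Ico_consecutive _ _ _),
    Finset.Ico_union_Ico_eq_Ico hij (by omega)]

lemma cnt_self (i : ℤ) : cnt x i i = x i := by
  simp [cnt]

lemma cnt_succ_right {j i : ℤ} (h : j ≤ i) : cnt x j i = cnt x j (i - 1) + x i := by
  rw [cnt_split x h (by omega), cnt_self]

lemma cnt_of_lt_s9 {i j : ℤ} (h : j < i) : cnt x i j = 0 := by
  simp [cnt, Finset.Icc_eq_empty_of_lt h]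

lemma cnt_eq_zero {i j : ℤ} (h : ∀ k, i ≤ k → k ≤ j → x k = 0) : cnt x i j = 0 :=
  Finset.sum_eq_zero fun k hk => h k (Finset.mem_Icc.mp hk).1 (Finset.mem_Icc.mp hk).2

variable {x}

lemma cnt_nonneg (hx : IsConfig x) (i j : ℤ) : 0 ≤ cnt x i j :=
  Finset.sum_nonneg fun k _ => by rcases hx k with h | h <;> omega

end Counts

lemma cnt_add (x y : Config) (i j : ℤ) : cnt (x + y) i j = cnt x i j + cnt y i j :=
  Finset.sum_add_distrib

section Queue

variable {a s : Config}

lemma queue_le_iff (hfq : FinQ a s) {i z : ℤ} :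
    queue a s i ≤ z ↔ 0 ≤ z ∧ ∀ j ≤ i, cnt a j i - cnt s j i ≤ z := by
  have hbdd : BddAbove {q : ℤ | ∃ j ≤ i, q = max (cnt a j i - cnt s j i) 0} := by
    obtain ⟨M, hM⟩ := hfq i
    exact ⟨max M 0, by rintro _ ⟨j, hj, rfl⟩; exact max_le_max_right 0 (hM ⟨j, hj, rfl⟩)⟩
  rw [queue, csSup_le_iff hbdd ⟨_, i, le_rfl, rfl⟩]
  constructor
  · intro h
    exact ⟨(le_max_right _ _).trans (h _ ⟨i, le_rfl, rfl⟩),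
      fun j hj => (le_max_left _ _).trans (h _ ⟨j, hj, rfl⟩)⟩
  · rintro ⟨hz, h⟩ _ ⟨j, hj, rfl⟩
    exact max_le (h j hj) hz

lemma queue_nonneg_s9 (hfq : FinQ a s) (i : ℤ) : 0 ≤ queue a s i :=
  ((queue_le_iff hfq).mp le_rfl).1

lemma sub_le_queue (hfq : FinQ a s) {i j : ℤ} (hj : j ≤ i) :
    cnt a j i - cnt s j i ≤ queue a s i :=
  ((queue_le_iff hfq).mp le_rfl).2 j hj

lemma queue_eq_max (hfq : FinQ a s) (i : ℤ) :
    queue a s i = max (queue a s (i - 1) + a i - s i) 0 := by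
  apply le_antisymm
  · refine (queue_le_iff hfq).mpr ⟨le_max_right _ _, fun j hj => ?_⟩
    refine le_trans ?_ (le_max_left _ _)
    rcases hj.eq_or_lt with rfl | hlt
    · have := queue_nonneg_s9 hfq (j - 1)
      rw [cnt_self, cnt_self]
      omega
    · have := sub_le_queue hfq (show j ≤ i - 1 by omega)
      rw [cnt_succ_right a hj, cnt_succ_right s hj]
      omega
  · have hi := sub_le_queue hfq (le_refl i)
    rw [cnt_self, cnt_self] at hi
    have hprev : queue a s (i - 1) ≤ queue a s i - a i + s i := by
      refine (queue_le_iff hfq).mpr ⟨by omega, fun j hj => ?_⟩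
      have := sub_le_queue hfq (show j ≤ i by omega)
      rw [cnt_succ_right a (by omega), cnt_succ_right s (by omega)] at this
      omega
    exact max_le (by omega) (queue_nonneg_s9 hfq i)

lemma isConfig_unusedSrv (a s : Config) : IsConfig (unusedSrv a s) := by
  intro i
  unfold unusedSrv
  split_ifs <;> simp

lemma queue_eq_zero_of_unusedSrv (hfq : FinQ a s) {i : ℤ} (hu : unusedSrv a s i = 1) :
    queue a s (i - 1) = 0 ∧ queue a s i = 0 := by
  have hrec := queue_eq_max hfq i
  unfold unusedSrv at hu
  split_ifs at hu with h
  · exact ⟨h.2.1, by omega⟩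
  · omega

variable (hfq : FinQ a s) (ha : IsConfig a) (hs : IsConfig s)
include hfq ha hs

lemma dep_eq (i : ℤ) : dep a s i = a i + queue a s (i - 1) - queue a s i := by
  have hrec := queue_eq_max hfq i
  have := queue_nonneg_s9 hfq (i - 1)
  have := ha i
  have := hs i
  unfold dep
  split_ifs <;> omega

lemma dep_add_unusedSrv : dep a s + unusedSrv a s = s := by
  funext i
  have := queue_nonneg_s9 hfq (i - 1)
  have := ha i
  have := hs i
  simp only [Pi.add_apply, unusedSrv, dep]
  split_ifs <;> omega

lemma cnt_dep_s9 {l m : ℤ} (h : l - 1 ≤ m) :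
    cnt (dep a s) l m = cnt a l m + queue a s (l - 1) - queue a s m := by
  induction m, h using Int.leInduction with
  | base => simp [cnt_of_lt_s9 _ (sub_one_lt l)]
  | succ m hm ih =>
    rw [cnt_succ_right _ (by omega), cnt_succ_right a (by omega), dep_eq hfq ha hs,
      add_sub_cancel_right, ih]
    ring

end Queue

lemma inf'_add_cnt_suffix_eq_inf'_add_cnt_prefix {q u : ℤ → ℤ} (hq : ∀ i, 0 ≤ q i)
    (hu : IsConfig u) (hqu : ∀ i, u i = 1 → q (i - 1) = 0 ∧ q i = 0) {s₀ t : ℤ} (hst : s₀ ≤ t) :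
    (Finset.Icc s₀ t).inf' (Finset.nonempty_Icc.mpr hst) (fun l => q (l - 1) + cnt u l (t - 1)) =
      (Finset.Icc s₀ t).inf' (Finset.nonempty_Icc.mpr hst)
        (fun l => q (l - 1) + cnt u s₀ (l - 1)) := by
  by_cases hunused : ∃ i, s₀ ≤ i ∧ i ≤ t - 1 ∧ u i = 1
  · obtain ⟨last, ⟨hlast_ge, hlast_le, hu_last⟩, hlast⟩ :=
      Int.exists_greatest_of_bdd ⟨t - 1, fun z hz => hz.2.1⟩ hunused
    obtain ⟨first, ⟨hfirst_ge, hfirst_le, hu_first⟩, hfirst⟩ :=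
      Int.exists_least_of_bdd ⟨s₀, fun z hz => hz.1⟩ hunused
    have hsuffix : q (last + 1 - 1) + cnt u (last + 1) (t - 1) = 0 := by
      rw [add_sub_cancel_right, (hqu last hu_last).2, zero_add]
      refine cnt_eq_zero u fun k hk hkt => (hu k).resolve_right fun h => ?_
      have := hlast k ⟨by omega, hkt, h⟩
      omega
    have hprefix : q (first - 1) + cnt u s₀ (first - 1) = 0 := by
      rw [(hqu first hu_first).1, zero_add]
      refine cnt_eq_zero u fun k hk hkf => (hu k).resolve_right fun h => ?_
      have := hfirst k ⟨hk, by omega, h⟩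
      omega
    trans 0
    · exact Finset.inf'_eq_of_forall_le_of_eq _ (fun l _ => add_nonneg (hq _) (cnt_nonneg hu _ _))
        (Finset.mem_Icc.mpr ⟨by omega, by omega⟩) hsuffix
    · symm
      exact Finset.inf'_eq_of_forall_le_of_eq _ (fun l _ => add_nonneg (hq _) (cnt_nonneg hu _ _))
        (Finset.mem_Icc.mpr ⟨hfirst_ge, by omega⟩) hprefix
  · push Not at hunused
    have hzero : ∀ k, s₀ ≤ k → k ≤ t - 1 → u k = 0 :=
      fun k hk hkt => (hu k).resolve_right (hunused k hk hkt)
    refine Finset.inf'_congr _ rfl fun l hl => ?_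
    rw [Finset.mem_Icc] at hl
    rw [cnt_eq_zero u fun k hk hkt => hzero k (by omega) hkt,
      cnt_eq_zero u fun k hk hkt => hzero k hk (by omega)]

/-- With `d = D(a,s)` and `r = R(a,s)`, for all `s₀ < t`,
`min_{ℓ ∈ [s₀,t]} (a[s₀,ℓ−1] + s[ℓ,t−1]) = min_{ℓ ∈ [s₀,t]} (r[s₀,ℓ−1] + d[ℓ,t−1])`. -/
theorem stmt9 (a s : Config) (ha : IsConfig a) (hs : IsConfig s) (hfq : FinQ a s) :
    ∀ s₀ t : ℤ, ∀ hst : s₀ < t,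
      (Finset.Icc s₀ t).inf' (Finset.nonempty_Icc.mpr hst.le)
          (fun l => cnt a s₀ (l - 1) + cnt s l (t - 1))
        = (Finset.Icc s₀ t).inf' (Finset.nonempty_Icc.mpr hst.le)
          (fun l => cnt (Rmap a s) s₀ (l - 1) + cnt (dep a s) l (t - 1)) := by
  intro s₀ t hst
  obtain ⟨C, hC⟩ : ∃ C, cnt a s₀ (t - 1) - queue a s (t - 1) = C := ⟨_, rfl⟩
  have hsrv : ∀ l m, cnt s l m = cnt (dep a s) l m + cnt (unusedSrv a s) l m := fun l m => by
    rw [← cnt_add, dep_add_unusedSrv hfq ha hs]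
  have hdep : ∀ l ∈ Finset.Icc s₀ t,
      cnt a s₀ (l - 1) + cnt (dep a s) l (t - 1) = C + queue a s (l - 1) := by
    intro l hl
    rw [Finset.mem_Icc] at hl
    rw [← hC, cnt_dep_s9 hfq ha hs (by omega), cnt_split a (k := t - 1) hl.1 (by omega)]
    ring
  have hF : ∀ l ∈ Finset.Icc s₀ t, cnt a s₀ (l - 1) + cnt s l (t - 1) =
      C + (queue a s (l - 1) + cnt (unusedSrv a s) l (t - 1)) := by
    intro l hl
    rw [hsrv, ← add_assoc, hdep l hl, add_assoc]
  have hG : ∀ l ∈ Finset.Icc s₀ t, cnt (Rmap a s) s₀ (l - 1) + cnt (dep a s) l (t - 1) =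
      C + (queue a s (l - 1) + cnt (unusedSrv a s) s₀ (l - 1)) := by
    intro l hl
    rw [show Rmap a s = a + unusedSrv a s from rfl, cnt_add, add_right_comm, hdep l hl, add_assoc]
  rw [Finset.inf'_congr _ rfl hF, Finset.inf'_congr _ rfl hG, ← Finset.add_inf',
    ← Finset.add_inf', inf'_add_cnt_suffix_eq_inf'_add_cnt_prefix (queue_nonneg_s9 hfq)
      (isConfig_unusedSrv a s) (fun i => queue_eq_zero_of_unusedSrv hfq) hst.le]
end
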